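/- In a combinatorial auction setting with valuations 'beyond' subadditive — i.e., M is a finite ground set of items, 𝒪ᵢ = 2^M, every member of 𝒱ᵢ is a nonnegative monotone valuation, and 𝒱ᵢ contains every normalized monotone subadditive valuation — the pair (𝒱ᵢ, 𝒪ᵢ) has the upper semilattice property. -/
import Mathlib


/-!
Statement 7: In a combinatorial auction setting with valuations 'beyond'
subadditive (every member of 𝒱ᵢ is nonnegative and monotone, and 𝒱ᵢ contains
every normalized monotone subadditive valuation), the pair (𝒱ᵢ, 𝒪ᵢ) has the
upper semilattice property.
-/

/-- The upper semilattice property of a pair (𝒱ᵢ, 𝒪ᵢ). -/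
def UpperSemilatticeProperty {Oi : Type*} (Vi : Set (Oi → ℝ)) : Prop :=
  ∀ oi : Oi, ∀ vi ∈ Vi, ∀ vi' ∈ Vi, ∃ vi'' ∈ Vi, ∀ oi' : Oi,
    vi'' oi - vi'' oi' ≥ max (vi oi - vi oi') (vi' oi - vi' oi')

theorem beyondSubadditive_upperSemilattice (M : Type*) [Fintype M] [DecidableEq M]
    (Vi : Set (Finset M → ℝ))
    (hmem : ∀ v ∈ Vi, (∀ T : Finset M, 0 ≤ v T) ∧
      (∀ S T : Finset M, S ⊆ T → v S ≤ v T))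
    (hsub : ∀ v : Finset M → ℝ, v ∅ = 0 →
      (∀ S T : Finset M, S ⊆ T → v S ≤ v T) →
      (∀ S T : Finset M, v (S ∪ T) ≤ v S + v T) → v ∈ Vi) :
    UpperSemilatticeProperty Vi := by
  intro oi vi hvi vi' hvi'
  obtain ⟨-, hvimono⟩ := hmem vi hvi
  obtain ⟨-, hvi'mono⟩ := hmem vi' hvi'
  set K : ℝ := max (vi oi - vi ∅) (vi' oi - vi' ∅) with hK
  have hK0 : 0 ≤ K := le_trans (by linarith [hvimono ∅ oi (Finset.empty_subset oi)])
    (le_max_left _ _)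
  refine ⟨fun S => K * ((S ∩ oi).card : ℝ), ?_, ?_⟩
  · apply hsub
    · simp
    · intro S T hST
      have : (S ∩ oi).card ≤ (T ∩ oi).card :=
        Finset.card_le_card (Finset.inter_subset_inter hST le_rfl)
      have : ((S ∩ oi).card : ℝ) ≤ ((T ∩ oi).card : ℝ) := by exact_mod_cast this
      nlinarith
    · intro S T
      have h1 : (S ∪ T) ∩ oi = (S ∩ oi) ∪ (T ∩ oi) := Finset.union_inter_distrib_right S T oi
      have h2 : ((S ∪ T) ∩ oi).card ≤ (S ∩ oi).card + (T ∩ oi).card := by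
        rw [h1]; exact Finset.card_union_le _ _
      have h2' : (((S ∪ T) ∩ oi).card : ℝ) ≤ ((S ∩ oi).card : ℝ) + ((T ∩ oi).card : ℝ) := by
        exact_mod_cast h2
      nlinarith
  · intro oi'
    have hoioi : oi ∩ oi = oi := Finset.inter_self oi
    by_cases hsubset : oi ⊆ oi'
    · -- both sides ≤ 0
      have hcard : (oi' ∩ oi) = oi := by
        apply Finset.Subset.antisymm (Finset.inter_subset_right)
        intro x hx; exact Finset.mem_inter.mpr ⟨hsubset hx, hx⟩
      simp only [hoioi, hcard]
      have h1 : vi oi ≤ vi oi' := hvimono _ _ hsubset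
      have h2 : vi' oi ≤ vi' oi' := hvi'mono _ _ hsubset
      simp only [ge_iff_le, sub_self, max_le_iff]
      constructor <;> linarith
    · -- gap is ≥ K
      have hstrict : (oi' ∩ oi).card < oi.card := by
        apply Finset.card_lt_card
        constructor
        · exact Finset.inter_subset_right
        · intro h
          exact hsubset (fun x hx => Finset.mem_inter.mp (h hx) |>.1)
      have hle : (oi' ∩ oi).card + 1 ≤ oi.card := hstrict
      have hcast : ((oi' ∩ oi).card : ℝ) + 1 ≤ (oi.card : ℝ) := by exact_mod_cast hle
      have hgap : K ≤ K * (oi.card : ℝ) - K * ((oi' ∩ oi).card : ℝ) := by nlinarith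
      simp only [hoioi]
      refine le_trans (max_le_max ?_ ?_) (le_trans (max_le (le_max_left _ _) (le_max_right _ _)) (le_trans (le_refl K) hgap))
      · linarith [hvimono ∅ oi' (Finset.empty_subset oi')]
      · linarith [hvi'mono ∅ oi' (Finset.empty_subset oi')]
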